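/- Let (X,{f_i}_{i∈I}) be an l_θP-space and Y ⊆ X. Then Y is modal if and only if Y = ⋃_{y∈Y} ( [{f_i(y) : i∈I}) ∪ ({f_i(y) : i∈I}] ), where [S) = {x ∈ X : s ≤ x for some s ∈ S} and (S] = {x ∈ X : x ≤ s for some s ∈ S}. Consequently, if Y is modal then X\Y is modal, Y is convex, and Y is both an up-set and a down-set of X. -/
import Mathlib


/-- The axioms of an `l_θP`-space except the density axiom (lP6):
`X` is assumed to be a Priestley space (via `[CompactSpace X]` and
`[PriestleySpace X]`), each `f i` is continuous, `x ≤ y` implies `f i x = f i y`,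
`i ≤ j` implies `f i x ≤ f j x`, and `f i ∘ f j = f i`. -/
structure IsLPSpaceAux {I X : Type*} [LinearOrder I] [PartialOrder X] [TopologicalSpace X]
    (f : I → X → X) : Prop where
  continuous : ∀ i, Continuous (f i)
  eq_of_le : ∀ (i : I) ⦃x y : X⦄, x ≤ y → f i x = f i y
  mono : ∀ ⦃i j : I⦄, i ≤ j → ∀ x, f i x ≤ f j x
  comp : ∀ i j x, f i (f j x) = f i x

/-- An `l_θP`-space: the above axioms together with density of `⋃ i, f i (X)`. -/
structure IsLPSpace {I X : Type*} [LinearOrder I] [PartialOrder X] [TopologicalSpace X]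
    (f : I → X → X) extends IsLPSpaceAux f : Prop where
  dense : Dense (⋃ i, Set.range (f i))

/-- `Y` is semimodal if `f i '' Y ⊆ Y` for all `i`. -/
def Semimodal {I X : Type*} (f : I → X → X) (Y : Set X) : Prop := ∀ i, f i '' Y ⊆ Y

/-- `Y` is modal if `f i ⁻¹' Y = Y` for all `i`. -/
def Modal {I X : Type*} (f : I → X → X) (Y : Set X) : Prop := ∀ i, f i ⁻¹' Y = Y

/-- `Y` is a θ-subset if `⋃ i, f i '' Y ⊆ Y ⊆ closure (⋃ i, f i '' Y)`. -/
def ThetaSubset {I X : Type*} [TopologicalSpace X] (f : I → X → X) (Y : Set X) : Prop :=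
  (⋃ i, f i '' Y) ⊆ Y ∧ Y ⊆ closure (⋃ i, f i '' Y)

/-- Every point is comparable with each of its images. -/
lemma lp_comparable {I X : Type*} [LinearOrder I] [PartialOrder X] [TopologicalSpace X]
    [CompactSpace X] [PriestleySpace X] {f : I → X → X} (hf : IsLPSpace f)
    (i : I) (x : X) : f i x ≤ x ∨ x ≤ f i x := by
  by_contra h
  push_neg at h
  obtain ⟨h1, h2⟩ := h
  obtain ⟨U, hU, hUup, hxU, hfxU⟩ := exists_isClopen_upper_of_not_le h2
  obtain ⟨V, hV, hVup, hfxV, hxV⟩ := exists_isClopen_upper_of_not_le h1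
  set N : Set X := (U ∩ Vᶜ) ∩ f i ⁻¹' (Uᶜ ∩ V) with hN
  have hNopen : IsOpen N :=
    ((hU.isOpen.inter hV.compl.isOpen).inter
      (((hU.compl.isOpen).inter hV.isOpen).preimage (hf.continuous i)))
  have hxN : x ∈ N := ⟨⟨hxU, hxV⟩, hfxU, hfxV⟩
  obtain ⟨d, hdN, hdD⟩ := hf.dense.inter_open_nonempty N hNopen ⟨x, hxN⟩
  rw [Set.mem_iUnion] at hdD
  obtain ⟨j, z, hz⟩ := hdD
  have hfid : f i d = f i z := by rw [← hz, hf.comp]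
  have hcomp : d ≤ f i d ∨ f i d ≤ d := by
    rcases le_total j i with hji | hij
    · left; rw [hfid, ← hz]; exact hf.mono hji z
    · right; rw [hfid, ← hz]; exact hf.mono hij z
  obtain ⟨⟨hdU, hdV⟩, hfdU, hfdV⟩ := hdN
  rcases hcomp with hc | hc
  · exact hfdU (hUup hc hdU)
  · exact hdV (hVup hc hfdV)

/-- `Y` is modal iff `Y = ⋃_{y ∈ Y} ([{f i y : i}) ∪ ({f i y : i}])`;
consequently a modal set has modal complement, is convex, and is both an up-set and a
down-set. -/
theorem stmt12 {I X : Type*} [LinearOrder I] [PartialOrder X] [TopologicalSpace X]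
    [CompactSpace X] [PriestleySpace X] (f : I → X → X) (hf : IsLPSpace f)
    (Y : Set X) :
    (Modal f Y ↔ Y = ⋃ y ∈ Y, ({x | ∃ i, f i y ≤ x} ∪ {x | ∃ i, x ≤ f i y})) ∧
    (Modal f Y →
      Modal f Yᶜ ∧
      (∀ ⦃x z w : X⦄, x ≤ z → z ≤ w → x ∈ Y → w ∈ Y → z ∈ Y) ∧
      IsUpperSet Y ∧ IsLowerSet Y) := by
  -- any point of X gives an index i
  have hidx : ∀ _ : X, ∃ i : I, True := by
    intro x
    haveI : Nonempty X := ⟨x⟩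
    obtain ⟨d, hd⟩ := hf.dense.nonempty
    rw [Set.mem_iUnion] at hd
    obtain ⟨i, -⟩ := hd
    exact ⟨i, trivial⟩
  -- membership in the big union, unfolded
  have hmem : ∀ x : X, x ∈ (⋃ y ∈ Y, ({x | ∃ i, f i y ≤ x} ∪ {x | ∃ i, x ≤ f i y})) ↔
      ∃ y ∈ Y, (∃ i, f i y ≤ x) ∨ (∃ i, x ≤ f i y) := by
    intro x
    simp [Set.mem_iUnion, Set.mem_union, Set.mem_setOf_eq]
  have hupper : Modal f Y → IsUpperSet Y := by
    intro hM a b hab ha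
    obtain ⟨i, -⟩ := hidx a
    have : f i a ∈ Y := by rw [← hM i] at ha; exact ha
    rw [hf.eq_of_le i hab] at this
    rw [← hM i]; exact this
  have hlower : Modal f Y → IsLowerSet Y := by
    intro hM a b hba hb
    obtain ⟨i, -⟩ := hidx a
    have : f i b ∈ Y := by
      have h := hb
      rw [← hM i] at h
      have h' : f i a ∈ Y := h
      rwa [← hf.eq_of_le i hba] at h'
    rw [← hM i]; exact this
  constructor
  · constructor
    · intro hM
      apply Set.Subset.antisymm
      · intro x hx
        obtain ⟨i, -⟩ := hidx x
        rw [hmem]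
        refine ⟨x, hx, ?_⟩
        rcases lp_comparable hf i x with hc | hc
        · exact Or.inl ⟨i, hc⟩
        · exact Or.inr ⟨i, hc⟩
      · intro x hx
        rw [hmem] at hx
        obtain ⟨y, hy, hx⟩ := hx
        rcases hx with ⟨i, hle⟩ | ⟨i, hle⟩
        · have h1 : f i y = f i x := by
            rw [← hf.eq_of_le i hle, hf.comp]
          have h2 : f i y ∈ Y := by rw [← hM i] at hy; exact hy
          rw [h1] at h2
          rw [← hM i]; exact h2
        · have h1 : f i x = f i y := by
            rw [hf.eq_of_le i hle, hf.comp]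
          have h2 : f i y ∈ Y := by rw [← hM i] at hy; exact hy
          rw [← h1] at h2
          rw [← hM i]; exact h2
    · -- union representation → Modal
      intro hrep i
      ext z
      constructor
      · intro hz
        have hfz : f i z ∈ Y := hz
        rw [hrep, hmem]
        refine ⟨f i z, hfz, ?_⟩
        have : f i (f i z) = f i z := hf.comp i i z
        rcases lp_comparable hf i z with hc | hc
        · exact Or.inl ⟨i, by rw [this]; exact hc⟩
        · exact Or.inr ⟨i, by rw [this]; exact hc⟩
      · intro hz
        have hz' := hz
        rw [hrep, hmem] at hz'
        obtain ⟨y, hy, hc⟩ := hz'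
        show f i z ∈ Y
        rw [hrep, hmem]
        refine ⟨y, hy, ?_⟩
        rcases hc with ⟨j, hle⟩ | ⟨j, hle⟩
        · left
          exact ⟨i, le_of_eq (by rw [← hf.eq_of_le i hle, hf.comp])⟩
        · left
          exact ⟨i, le_of_eq (by rw [hf.eq_of_le i hle, hf.comp])⟩
  · intro hM
    refine ⟨?_, ?_, hupper hM, hlower hM⟩
    · intro i
      rw [Set.preimage_compl, hM i]
    · intro x z w hxz _ hx _
      exact hupper hM hxz hx
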